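/- arXiv:1510.01580 — 2 statements merged into one kernel-verified Lean document; each statement's English description precedes it below -/
import Mathlib

section
/- Let n be a positive integer, σ = 1 or σ = −1, and let F(ξ, y, t) be a smooth real-valued function on an open set on which Δ := 1 + n t F^{n−1} F_ξ never vanishes and which satisfies the transformed equation (∂/∂ξ)[(F_t + σ n t F^{n−1} F_y²)/Δ] = σ F_yy. Let ξ(x, y, t) be a smooth function satisfying the implicit relation x = t · F(ξ(x,y,t), y, t)^n + ξ(x,y,t) on an open set of (x, y, t). Then the function u(x, y, t) := F(ξ(x,y,t), y, t) satisfies the generalized dKP equation (u_t + u^n u_x)_x = σ u_yy on that open set. -/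
open Filter Topology

private lemma ldec (L : ℝ × ℝ × ℝ →L[ℝ] ℝ) (a b c : ℝ) :
    L (a, b, c) = a * L (1, 0, 0) + b * L (0, 1, 0) + c * L (0, 0, 1) := by
  have h : ((a, b, c) : ℝ × ℝ × ℝ)
      = a • ((1, 0, 0) : ℝ × ℝ × ℝ) + b • (0, 1, 0) + c • (0, 0, 1) := by
    simp [Prod.ext_iff]
  rw [h, map_add, map_add, map_smul, map_smul, map_smul, smul_eq_mul, smul_eq_mul, smul_eq_mul]

private lemma hd_comp1 {H : ℝ × ℝ × ℝ → ℝ} {L : ℝ × ℝ × ℝ →L[ℝ] ℝ} {c : ℝ → ℝ} {c' s0 y t : ℝ}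
    (hH : HasFDerivAt H L (c s0, y, t)) (hc : HasDerivAt c c' s0) :
    HasDerivAt (fun s => H (c s, y, t)) (L (c', 0, 0)) s0 :=
  hH.comp_hasDerivAt s0 (hc.prodMk ((hasDerivAt_const s0 y).prodMk (hasDerivAt_const s0 t)))

private lemma hd_comp2 {H : ℝ × ℝ × ℝ → ℝ} {L : ℝ × ℝ × ℝ →L[ℝ] ℝ} {c : ℝ → ℝ} {c' s0 t : ℝ}
    (hH : HasFDerivAt H L (c s0, s0, t)) (hc : HasDerivAt c c' s0) :
    HasDerivAt (fun s => H (c s, s, t)) (L (c', 1, 0)) s0 :=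
  hH.comp_hasDerivAt s0 (hc.prodMk ((hasDerivAt_id s0).prodMk (hasDerivAt_const s0 t)))

private lemma hd_comp3 {H : ℝ × ℝ × ℝ → ℝ} {L : ℝ × ℝ × ℝ →L[ℝ] ℝ} {c : ℝ → ℝ} {c' s0 y : ℝ}
    (hH : HasFDerivAt H L (c s0, y, s0)) (hc : HasDerivAt c c' s0) :
    HasDerivAt (fun s => H (c s, y, s)) (L (c', 0, 1)) s0 :=
  hH.comp_hasDerivAt s0 (hc.prodMk ((hasDerivAt_const s0 y).prodMk (hasDerivAt_id s0)))

private lemma mem_slice1 {S : Set (ℝ × ℝ × ℝ)} (hS : IsOpen S) {x y t : ℝ}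
    (h : ((x, y, t) : ℝ × ℝ × ℝ) ∈ S) : ∀ᶠ s in 𝓝 x, ((s, y, t) : ℝ × ℝ × ℝ) ∈ S := by
  have hc : Continuous (fun s : ℝ => ((s, y, t) : ℝ × ℝ × ℝ)) := by continuity
  exact hc.continuousAt.preimage_mem_nhds (hS.mem_nhds h)

private lemma mem_slice2 {S : Set (ℝ × ℝ × ℝ)} (hS : IsOpen S) {x y t : ℝ}
    (h : ((x, y, t) : ℝ × ℝ × ℝ) ∈ S) : ∀ᶠ s in 𝓝 y, ((x, s, t) : ℝ × ℝ × ℝ) ∈ S := by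
  have hc : Continuous (fun s : ℝ => ((x, s, t) : ℝ × ℝ × ℝ)) := by continuity
  exact hc.continuousAt.preimage_mem_nhds (hS.mem_nhds h)

private lemma mem_slice3 {S : Set (ℝ × ℝ × ℝ)} (hS : IsOpen S) {x y t : ℝ}
    (h : ((x, y, t) : ℝ × ℝ × ℝ) ∈ S) : ∀ᶠ s in 𝓝 t, ((x, y, s) : ℝ × ℝ × ℝ) ∈ S := by
  have hc : Continuous (fun s : ℝ => ((x, y, s) : ℝ × ℝ × ℝ)) := by continuity
  exact hc.continuousAt.preimage_mem_nhds (hS.mem_nhds h)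


/-- Partial derivative in the first variable of a function of three real variables. -/
noncomputable def pd1 (f : ℝ → ℝ → ℝ → ℝ) : ℝ → ℝ → ℝ → ℝ :=
  fun x y t => deriv (fun s => f s y t) x

/-- Partial derivative in the second variable of a function of three real variables. -/
noncomputable def pd2 (f : ℝ → ℝ → ℝ → ℝ) : ℝ → ℝ → ℝ → ℝ :=
  fun x y t => deriv (fun s => f x s t) y

/-- Partial derivative in the third variable of a function of three real variables. -/
noncomputable def pd3 (f : ℝ → ℝ → ℝ → ℝ) : ℝ → ℝ → ℝ → ℝ :=
  fun x y t => deriv (fun s => f x y s) t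

private lemma pd1_congr {f g : ℝ → ℝ → ℝ → ℝ} {S : Set (ℝ × ℝ × ℝ)} (hS : IsOpen S)
    (hfg : ∀ q ∈ S, f q.1 q.2.1 q.2.2 = g q.1 q.2.1 q.2.2) {x y t : ℝ}
    (h : ((x, y, t) : ℝ × ℝ × ℝ) ∈ S) : pd1 f x y t = pd1 g x y t := by
  apply Filter.EventuallyEq.deriv_eq
  filter_upwards [mem_slice1 hS h] with s hs
  exact hfg _ hs

private lemma pd2_congr {f g : ℝ → ℝ → ℝ → ℝ} {S : Set (ℝ × ℝ × ℝ)} (hS : IsOpen S)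
    (hfg : ∀ q ∈ S, f q.1 q.2.1 q.2.2 = g q.1 q.2.1 q.2.2) {x y t : ℝ}
    (h : ((x, y, t) : ℝ × ℝ × ℝ) ∈ S) : pd2 f x y t = pd2 g x y t := by
  apply Filter.EventuallyEq.deriv_eq
  filter_upwards [mem_slice2 hS h] with s hs
  exact hfg _ hs

set_option maxHeartbeats 1600000

/-- If F solves the transformed equation `((F_t + σ n t F^{n−1} F_y²)/Δ)_ξ = σ F_yy`
with Δ = 1 + n t F^{n−1} F_ξ ≠ 0, and ξ(x,y,t) solves the implicit relation
x = t F(ξ(x,y,t),y,t)ⁿ + ξ(x,y,t), then u(x,y,t) = F(ξ(x,y,t),y,t) solves the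
generalized dKP equation `(u_t + uⁿ u_x)_x = σ u_yy`. -/
theorem stmt_1 (n : ℕ) (hn : 0 < n) (σ : ℝ) (hσ : σ = 1 ∨ σ = -1)
    (F : ℝ → ℝ → ℝ → ℝ) (U : Set (ℝ × ℝ × ℝ)) (hU : IsOpen U)
    (hF : ContDiffOn ℝ (⊤ : ℕ∞) (fun q : ℝ × ℝ × ℝ => F q.1 q.2.1 q.2.2) U)
    (hΔ : ∀ q ∈ U, 1 + (n : ℝ) * q.2.2 * (F q.1 q.2.1 q.2.2) ^ (n - 1)
        * pd1 F q.1 q.2.1 q.2.2 ≠ 0)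
    (heqF : ∀ q ∈ U,
      deriv (fun s =>
        (pd3 F s q.2.1 q.2.2
            + σ * (n : ℝ) * q.2.2 * (F s q.2.1 q.2.2) ^ (n - 1) * (pd2 F s q.2.1 q.2.2) ^ 2)
          / (1 + (n : ℝ) * q.2.2 * (F s q.2.1 q.2.2) ^ (n - 1) * pd1 F s q.2.1 q.2.2)) q.1
        = σ * pd2 (pd2 F) q.1 q.2.1 q.2.2)
    (V : Set (ℝ × ℝ × ℝ)) (hV : IsOpen V) (ξf : ℝ → ℝ → ℝ → ℝ)
    (hξ : ContDiffOn ℝ (⊤ : ℕ∞) (fun p : ℝ × ℝ × ℝ => ξf p.1 p.2.1 p.2.2) V)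
    (hmap : ∀ p ∈ V, (ξf p.1 p.2.1 p.2.2, p.2.1, p.2.2) ∈ U)
    (hrel : ∀ p ∈ V,
      p.1 = p.2.2 * (F (ξf p.1 p.2.1 p.2.2) p.2.1 p.2.2) ^ n + ξf p.1 p.2.1 p.2.2)
    (u : ℝ → ℝ → ℝ → ℝ)
    (hu : ∀ x y t : ℝ, u x y t = F (ξf x y t) y t) :
    ∀ p ∈ V,
      pd1 (fun x y t => pd3 u x y t + (u x y t) ^ n * pd1 u x y t) p.1 p.2.1 p.2.2
        = σ * pd2 (pd2 u) p.1 p.2.1 p.2.2 := by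
  -- setup
  set G : ℝ × ℝ × ℝ → ℝ := fun q => F q.1 q.2.1 q.2.2 with hGdef
  have hGdiff : ∀ q ∈ U, HasFDerivAt G (fderiv ℝ G q) q := fun q hq =>
    ((hF.differentiableOn (by simp)).differentiableAt (hU.mem_nhds hq)).hasFDerivAt
  set g1 : ℝ × ℝ × ℝ → ℝ := fun q => fderiv ℝ G q (1, 0, 0) with hg1def
  set g2 : ℝ × ℝ × ℝ → ℝ := fun q => fderiv ℝ G q (0, 1, 0) with hg2def
  set g3 : ℝ × ℝ × ℝ → ℝ := fun q => fderiv ℝ G q (0, 0, 1) with hg3def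
  have hpd1F : ∀ a b c : ℝ, ((a, b, c) : ℝ × ℝ × ℝ) ∈ U → pd1 F a b c = g1 (a, b, c) :=
    fun a b c hq => (hd_comp1 (c := id) (hGdiff _ hq) (hasDerivAt_id a)).deriv
  have hpd2F : ∀ a b c : ℝ, ((a, b, c) : ℝ × ℝ × ℝ) ∈ U → pd2 F a b c = g2 (a, b, c) :=
    fun a b c hq => (hd_comp2 (c := fun _ => a) (hGdiff _ hq) (hasDerivAt_const b a)).deriv
  have hpd3F : ∀ a b c : ℝ, ((a, b, c) : ℝ × ℝ × ℝ) ∈ U → pd3 F a b c = g3 (a, b, c) :=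
    fun a b c hq => (hd_comp3 (c := fun _ => a) (hGdiff _ hq) (hasDerivAt_const c a)).deriv
  have hΔ' : ∀ q ∈ U, 1 + (n : ℝ) * q.2.2 * (G q) ^ (n - 1) * g1 q ≠ 0 := by
    rintro ⟨a, b, c⟩ hq
    have h0 : 1 + (n : ℝ) * c * (F a b c) ^ (n - 1) * pd1 F a b c ≠ 0 := hΔ (a, b, c) hq
    rwa [hpd1F a b c hq] at h0
  set Ξ : ℝ × ℝ × ℝ → ℝ := fun p => ξf p.1 p.2.1 p.2.2 with hΞdef
  have hΞdiff : ∀ p ∈ V, HasFDerivAt Ξ (fderiv ℝ Ξ p) p := fun p hp =>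
    ((hξ.differentiableOn (by simp)).differentiableAt (hV.mem_nhds hp)).hasFDerivAt
  -- the per-point computation on V
  have key : ∀ q : ℝ × ℝ × ℝ, q ∈ V →
      (pd3 u q.1 q.2.1 q.2.2 + (u q.1 q.2.1 q.2.2) ^ n * pd1 u q.1 q.2.1 q.2.2
          = g3 (ξf q.1 q.2.1 q.2.2, q.2.1, q.2.2)
            / (1 + (n : ℝ) * q.2.2 * (G (ξf q.1 q.2.1 q.2.2, q.2.1, q.2.2)) ^ (n - 1)
                * g1 (ξf q.1 q.2.1 q.2.2, q.2.1, q.2.2)))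
      ∧ (pd2 u q.1 q.2.1 q.2.2
          = g2 (ξf q.1 q.2.1 q.2.2, q.2.1, q.2.2)
            / (1 + (n : ℝ) * q.2.2 * (G (ξf q.1 q.2.1 q.2.2, q.2.1, q.2.2)) ^ (n - 1)
                * g1 (ξf q.1 q.2.1 q.2.2, q.2.1, q.2.2)))
      ∧ (fderiv ℝ Ξ q (1, 0, 0)
            * (1 + (n : ℝ) * q.2.2 * (G (ξf q.1 q.2.1 q.2.2, q.2.1, q.2.2)) ^ (n - 1)
                * g1 (ξf q.1 q.2.1 q.2.2, q.2.1, q.2.2)) = 1)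
      ∧ (fderiv ℝ Ξ q (0, 1, 0)
            * (1 + (n : ℝ) * q.2.2 * (G (ξf q.1 q.2.1 q.2.2, q.2.1, q.2.2)) ^ (n - 1)
                * g1 (ξf q.1 q.2.1 q.2.2, q.2.1, q.2.2))
          = -((n : ℝ) * q.2.2 * (G (ξf q.1 q.2.1 q.2.2, q.2.1, q.2.2)) ^ (n - 1)
                * g2 (ξf q.1 q.2.1 q.2.2, q.2.1, q.2.2))) := by
    rintro ⟨a, b, c⟩ hp'
    have hq' : ((ξf a b c, b, c) : ℝ × ℝ × ℝ) ∈ U := hmap (a, b, c) hp'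
    have hΔq : 1 + (n : ℝ) * c * (G (ξf a b c, b, c)) ^ (n - 1) * g1 (ξf a b c, b, c) ≠ 0 :=
      hΔ' _ hq'
    -- slices of ξ
    have hΞ1 : HasDerivAt (fun s => ξf s b c) (fderiv ℝ Ξ (a, b, c) (1, 0, 0)) a :=
      hd_comp1 (c := id) (hΞdiff _ hp') (hasDerivAt_id a)
    have hΞ2 : HasDerivAt (fun s => ξf a s c) (fderiv ℝ Ξ (a, b, c) (0, 1, 0)) b :=
      hd_comp2 (c := fun _ => a) (hΞdiff _ hp') (hasDerivAt_const b a)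
    have hΞ3 : HasDerivAt (fun s => ξf a b s) (fderiv ℝ Ξ (a, b, c) (0, 0, 1)) c :=
      hd_comp3 (c := fun _ => a) (hΞdiff _ hp') (hasDerivAt_const c a)
    set ξ1 := fderiv ℝ Ξ (a, b, c) (1, 0, 0) with hξ1def
    set ξ2 := fderiv ℝ Ξ (a, b, c) (0, 1, 0) with hξ2def
    set ξ3 := fderiv ℝ Ξ (a, b, c) (0, 0, 1) with hξ3def
    -- composed slices of G
    have hG1 : HasDerivAt (fun s => G (ξf s b c, b, c))
        (ξ1 * g1 (ξf a b c, b, c)) a := by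
      have h0 := hd_comp1 (c := fun s => ξf s b c) (s0 := a) (hGdiff _ hq') hΞ1
      rwa [show (fderiv ℝ G (ξf a b c, b, c)) (ξ1, 0, 0) = ξ1 * g1 (ξf a b c, b, c) by
        rw [ldec]; simp [hg1def]] at h0
    have hG2 : HasDerivAt (fun s => G (ξf a s c, s, c))
        (ξ2 * g1 (ξf a b c, b, c) + g2 (ξf a b c, b, c)) b := by
      have h0 := hd_comp2 (c := fun s => ξf a s c) (s0 := b) (hGdiff _ hq') hΞ2
      rwa [show (fderiv ℝ G (ξf a b c, b, c)) (ξ2, 1, 0)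
          = ξ2 * g1 (ξf a b c, b, c) + g2 (ξf a b c, b, c) by
        rw [ldec]; simp [hg1def, hg2def]] at h0
    have hG3 : HasDerivAt (fun s => G (ξf a b s, b, s))
        (ξ3 * g1 (ξf a b c, b, c) + g3 (ξf a b c, b, c)) c := by
      have h0 := hd_comp3 (c := fun s => ξf a b s) (s0 := c) (hGdiff _ hq') hΞ3
      rwa [show (fderiv ℝ G (ξf a b c, b, c)) (ξ3, 0, 1)
          = ξ3 * g1 (ξf a b c, b, c) + g3 (ξf a b c, b, c) by
        rw [ldec]; simp [hg1def, hg3def]] at h0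
    -- implicit differentiation of the relation
    have raw1 : (1 : ℝ) = c * ((n : ℝ) * (G (ξf a b c, b, c)) ^ (n - 1)
        * (ξ1 * g1 (ξf a b c, b, c))) + ξ1 := by
      have heq : (fun s : ℝ => s) =ᶠ[𝓝 a]
          (fun s => c * (F (ξf s b c) b c) ^ n + ξf s b c) := by
        filter_upwards [mem_slice1 hV hp'] with s hs using hrel _ hs
      have hR : HasDerivAt (fun s => c * (F (ξf s b c) b c) ^ n + ξf s b c)
          (c * ((n : ℝ) * (G (ξf a b c, b, c)) ^ (n - 1) * (ξ1 * g1 (ξf a b c, b, c))) + ξ1) a :=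
        ((hG1.pow n).const_mul c).add hΞ1
      calc (1 : ℝ) = deriv (fun s : ℝ => s) a := (hasDerivAt_id a).deriv.symm
      _ = _ := by rw [heq.deriv_eq, hR.deriv]
    have raw2 : (0 : ℝ) = c * ((n : ℝ) * (G (ξf a b c, b, c)) ^ (n - 1)
        * (ξ2 * g1 (ξf a b c, b, c) + g2 (ξf a b c, b, c))) + ξ2 := by
      have heq : (fun _ : ℝ => a) =ᶠ[𝓝 b]
          (fun s => c * (F (ξf a s c) s c) ^ n + ξf a s c) := by
        filter_upwards [mem_slice2 hV hp'] with s hs using hrel _ hs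
      have hR : HasDerivAt (fun s => c * (F (ξf a s c) s c) ^ n + ξf a s c)
          (c * ((n : ℝ) * (G (ξf a b c, b, c)) ^ (n - 1)
            * (ξ2 * g1 (ξf a b c, b, c) + g2 (ξf a b c, b, c))) + ξ2) b :=
        ((hG2.pow n).const_mul c).add hΞ2
      calc (0 : ℝ) = deriv (fun _ : ℝ => a) b := (deriv_const b a).symm
      _ = _ := by rw [heq.deriv_eq, hR.deriv]
    have raw3 : (0 : ℝ) = (1 * (G (ξf a b c, b, c)) ^ n
        + c * ((n : ℝ) * (G (ξf a b c, b, c)) ^ (n - 1)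
          * (ξ3 * g1 (ξf a b c, b, c) + g3 (ξf a b c, b, c)))) + ξ3 := by
      have heq : (fun _ : ℝ => a) =ᶠ[𝓝 c]
          (fun s => s * (F (ξf a b s) b s) ^ n + ξf a b s) := by
        filter_upwards [mem_slice3 hV hp'] with s hs using hrel _ hs
      have hR : HasDerivAt (fun s => s * (F (ξf a b s) b s) ^ n + ξf a b s)
          ((1 * (G (ξf a b c, b, c)) ^ n
            + c * ((n : ℝ) * (G (ξf a b c, b, c)) ^ (n - 1)
              * (ξ3 * g1 (ξf a b c, b, c) + g3 (ξf a b c, b, c)))) + ξ3) c :=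
        ((hasDerivAt_id c).mul (hG3.pow n)).add hΞ3
      calc (0 : ℝ) = deriv (fun _ : ℝ => a) c := (deriv_const c a).symm
      _ = _ := by rw [heq.deriv_eq, hR.deriv]
    have hs1 : ξ1 * (1 + (n : ℝ) * c * (G (ξf a b c, b, c)) ^ (n - 1)
        * g1 (ξf a b c, b, c)) = 1 := by linear_combination -raw1
    have hs2 : ξ2 * (1 + (n : ℝ) * c * (G (ξf a b c, b, c)) ^ (n - 1)
        * g1 (ξf a b c, b, c))
        = -((n : ℝ) * c * (G (ξf a b c, b, c)) ^ (n - 1) * g2 (ξf a b c, b, c)) := by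
      linear_combination -raw2
    have hs3 : ξ3 * (1 + (n : ℝ) * c * (G (ξf a b c, b, c)) ^ (n - 1)
        * g1 (ξf a b c, b, c))
        = -((G (ξf a b c, b, c)) ^ n
            + (n : ℝ) * c * (G (ξf a b c, b, c)) ^ (n - 1) * g3 (ξf a b c, b, c)) := by
      linear_combination -raw3
    -- values of the partial derivatives of u
    have hupd1 : pd1 u a b c = ξ1 * g1 (ξf a b c, b, c) := by
      have hfe : (fun s => u s b c) = fun s => G (ξf s b c, b, c) := funext fun s => hu s b c
      simp only [pd1]; rw [hfe]; exact hG1.deriv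
    have hupd2 : pd2 u a b c = ξ2 * g1 (ξf a b c, b, c) + g2 (ξf a b c, b, c) := by
      have hfe : (fun s => u a s c) = fun s => G (ξf a s c, s, c) := funext fun s => hu a s c
      simp only [pd2]; rw [hfe]; exact hG2.deriv
    have hupd3 : pd3 u a b c = ξ3 * g1 (ξf a b c, b, c) + g3 (ξf a b c, b, c) := by
      have hfe : (fun s => u a b s) = fun s => G (ξf a b s, b, s) := funext fun s => hu a b s
      simp only [pd3]; rw [hfe]; exact hG3.deriv
    have hua : u a b c = G (ξf a b c, b, c) := hu a b c
    refine ⟨?_, ?_, hs1, hs2⟩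
    · rw [hupd3, hupd1, hua]
      rw [eq_div_iff hΔq]
      linear_combination g1 (ξf a b c, b, c) * hs3
        + (G (ξf a b c, b, c)) ^ n * g1 (ξf a b c, b, c) * hs1
    · rw [hupd2, eq_div_iff hΔq]
      linear_combination g1 (ξf a b c, b, c) * hs2
  rintro ⟨x, y, t⟩ hp
  have hq0 : ((ξf x y t, y, t) : ℝ × ℝ × ℝ) ∈ U := hmap (x, y, t) hp
  have hΔ0 : 1 + (n : ℝ) * t * (G (ξf x y t, y, t)) ^ (n - 1) * g1 (ξf x y t, y, t) ≠ 0 :=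
    hΔ' _ hq0
  obtain ⟨-, -, hs1, hs2⟩ := key (x, y, t) hp
  dsimp only at hs1 hs2
  -- second derivative data at q0
  have hfd : ContDiffOn ℝ (⊤ : ℕ∞) (fderiv ℝ G) U := hF.fderiv_of_isOpen hU (by simp)
  have hD2 : HasFDerivAt (fderiv ℝ G) (fderiv ℝ (fderiv ℝ G) (ξf x y t, y, t))
      (ξf x y t, y, t) :=
    ((hfd.differentiableOn (by simp)).differentiableAt (hU.mem_nhds hq0)).hasFDerivAt
  set D2 := fderiv ℝ (fderiv ℝ G) (ξf x y t, y, t) with hD2def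
  have hsym : D2 (0, 1, 0) (1, 0, 0) = D2 (1, 0, 0) (0, 1, 0) :=
    second_derivative_symmetric_of_eventually
      (by filter_upwards [hU.mem_nhds hq0] with q hq using hGdiff q hq) hD2 _ _
  have hg1fd : HasFDerivAt g1
      ((ContinuousLinearMap.apply ℝ ℝ ((1 : ℝ), (0 : ℝ), (0 : ℝ))).comp D2) (ξf x y t, y, t) := by
    rw [hg1def]
    exact (ContinuousLinearMap.apply ℝ ℝ ((1 : ℝ), (0 : ℝ), (0 : ℝ))).hasFDerivAt.comp _ hD2
  have hg2fd : HasFDerivAt g2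
      ((ContinuousLinearMap.apply ℝ ℝ ((0 : ℝ), (1 : ℝ), (0 : ℝ))).comp D2) (ξf x y t, y, t) := by
    rw [hg2def]
    exact (ContinuousLinearMap.apply ℝ ℝ ((0 : ℝ), (1 : ℝ), (0 : ℝ))).hasFDerivAt.comp _ hD2
  have hg3fd : HasFDerivAt g3
      ((ContinuousLinearMap.apply ℝ ℝ ((0 : ℝ), (0 : ℝ), (1 : ℝ))).comp D2) (ξf x y t, y, t) := by
    rw [hg3def]
    exact (ContinuousLinearMap.apply ℝ ℝ ((0 : ℝ), (0 : ℝ), (1 : ℝ))).hasFDerivAt.comp _ hD2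
  -- slices of Ξ at (x,y,t)
  have hΞ1 : HasDerivAt (fun s => ξf s y t) (fderiv ℝ Ξ (x, y, t) (1, 0, 0)) x :=
    hd_comp1 (c := id) (hΞdiff _ hp) (hasDerivAt_id x)
  have hΞ2 : HasDerivAt (fun s => ξf x s t) (fderiv ℝ Ξ (x, y, t) (0, 1, 0)) y :=
    hd_comp2 (c := fun _ => x) (hΞdiff _ hp) (hasDerivAt_const y x)
  set ξ1 := fderiv ℝ Ξ (x, y, t) (1, 0, 0) with hξ1def
  set ξ2 := fderiv ℝ Ξ (x, y, t) (0, 1, 0) with hξ2def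
  -- composed slices through Φ at (x,y,t), x-direction
  have hG1 : HasDerivAt (fun s => G (ξf s y t, y, t)) (ξ1 * g1 (ξf x y t, y, t)) x := by
    have h0 := hd_comp1 (c := fun s => ξf s y t) (s0 := x) (hGdiff _ hq0) hΞ1
    rwa [show (fderiv ℝ G (ξf x y t, y, t)) (ξ1, 0, 0) = ξ1 * g1 (ξf x y t, y, t) by
      rw [ldec]; simp [hg1def]] at h0
  have hg1Φ1 : HasDerivAt (fun s => g1 (ξf s y t, y, t)) (ξ1 * D2 (1, 0, 0) (1, 0, 0)) x := by
    have h0 := hd_comp1 (c := fun s => ξf s y t) (s0 := x) hg1fd hΞ1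
    rwa [show ((ContinuousLinearMap.apply ℝ ℝ ((1 : ℝ), (0 : ℝ), (0 : ℝ))).comp D2) (ξ1, 0, 0)
        = ξ1 * D2 (1, 0, 0) (1, 0, 0) by rw [ldec]; simp] at h0
  have hg3Φ1 : HasDerivAt (fun s => g3 (ξf s y t, y, t)) (ξ1 * D2 (1, 0, 0) (0, 0, 1)) x := by
    have h0 := hd_comp1 (c := fun s => ξf s y t) (s0 := x) hg3fd hΞ1
    rwa [show ((ContinuousLinearMap.apply ℝ ℝ ((0 : ℝ), (0 : ℝ), (1 : ℝ))).comp D2) (ξ1, 0, 0)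
        = ξ1 * D2 (1, 0, 0) (0, 0, 1) by rw [ldec]; simp] at h0
  -- composed slices through Φ at (x,y,t), y-direction
  have hG2 : HasDerivAt (fun s => G (ξf x s t, s, t))
      (ξ2 * g1 (ξf x y t, y, t) + g2 (ξf x y t, y, t)) y := by
    have h0 := hd_comp2 (c := fun s => ξf x s t) (s0 := y) (hGdiff _ hq0) hΞ2
    rwa [show (fderiv ℝ G (ξf x y t, y, t)) (ξ2, 1, 0)
        = ξ2 * g1 (ξf x y t, y, t) + g2 (ξf x y t, y, t) by
      rw [ldec]; simp [hg1def, hg2def]] at h0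
  have hg1Φ2 : HasDerivAt (fun s => g1 (ξf x s t, s, t))
      (ξ2 * D2 (1, 0, 0) (1, 0, 0) + D2 (0, 1, 0) (1, 0, 0)) y := by
    have h0 := hd_comp2 (c := fun s => ξf x s t) (s0 := y) hg1fd hΞ2
    rwa [show ((ContinuousLinearMap.apply ℝ ℝ ((1 : ℝ), (0 : ℝ), (0 : ℝ))).comp D2) (ξ2, 1, 0)
        = ξ2 * D2 (1, 0, 0) (1, 0, 0) + D2 (0, 1, 0) (1, 0, 0) by rw [ldec]; simp] at h0
  have hg2Φ2 : HasDerivAt (fun s => g2 (ξf x s t, s, t))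
      (ξ2 * D2 (1, 0, 0) (0, 1, 0) + D2 (0, 1, 0) (0, 1, 0)) y := by
    have h0 := hd_comp2 (c := fun s => ξf x s t) (s0 := y) hg2fd hΞ2
    rwa [show ((ContinuousLinearMap.apply ℝ ℝ ((0 : ℝ), (1 : ℝ), (0 : ℝ))).comp D2) (ξ2, 1, 0)
        = ξ2 * D2 (1, 0, 0) (0, 1, 0) + D2 (0, 1, 0) (0, 1, 0) by rw [ldec]; simp] at h0
  -- the left-hand side of the goal
  have hden1 : HasDerivAt (fun s => 1 + (n : ℝ) * t * (G (ξf s y t, y, t)) ^ (n - 1)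
      * g1 (ξf s y t, y, t))
      (((n : ℝ) * t * (((n - 1 : ℕ) : ℝ) * (G (ξf x y t, y, t)) ^ (n - 1 - 1)
          * (ξ1 * g1 (ξf x y t, y, t))) * g1 (ξf x y t, y, t)
        + (n : ℝ) * t * (G (ξf x y t, y, t)) ^ (n - 1) * (ξ1 * D2 (1, 0, 0) (1, 0, 0)))) x :=
    (((hG1.pow (n - 1)).const_mul ((n : ℝ) * t)).mul hg1Φ1).const_add 1
  have hW : HasDerivAt (fun s => g3 (ξf s y t, y, t)
      / (1 + (n : ℝ) * t * (G (ξf s y t, y, t)) ^ (n - 1) * g1 (ξf s y t, y, t)))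
      ((ξ1 * D2 (1, 0, 0) (0, 0, 1)
          * (1 + (n : ℝ) * t * (G (ξf x y t, y, t)) ^ (n - 1) * g1 (ξf x y t, y, t))
        - g3 (ξf x y t, y, t)
          * (((n : ℝ) * t * (((n - 1 : ℕ) : ℝ) * (G (ξf x y t, y, t)) ^ (n - 1 - 1)
              * (ξ1 * g1 (ξf x y t, y, t))) * g1 (ξf x y t, y, t)
            + (n : ℝ) * t * (G (ξf x y t, y, t)) ^ (n - 1) * (ξ1 * D2 (1, 0, 0) (1, 0, 0)))))
        / (1 + (n : ℝ) * t * (G (ξf x y t, y, t)) ^ (n - 1) * g1 (ξf x y t, y, t)) ^ 2) x :=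
    hg3Φ1.div hden1 hΔ0
  have hL : pd1 (fun x y t => pd3 u x y t + (u x y t) ^ n * pd1 u x y t) x y t
      = (ξ1 * D2 (1, 0, 0) (0, 0, 1)
          * (1 + (n : ℝ) * t * (G (ξf x y t, y, t)) ^ (n - 1) * g1 (ξf x y t, y, t))
        - g3 (ξf x y t, y, t)
          * (((n : ℝ) * t * (((n - 1 : ℕ) : ℝ) * (G (ξf x y t, y, t)) ^ (n - 1 - 1)
              * (ξ1 * g1 (ξf x y t, y, t))) * g1 (ξf x y t, y, t)
            + (n : ℝ) * t * (G (ξf x y t, y, t)) ^ (n - 1) * (ξ1 * D2 (1, 0, 0) (1, 0, 0)))))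
        / (1 + (n : ℝ) * t * (G (ξf x y t, y, t)) ^ (n - 1) * g1 (ξf x y t, y, t)) ^ 2 := by
    rw [pd1_congr (f := fun x y t => pd3 u x y t + (u x y t) ^ n * pd1 u x y t)
      (g := fun a b c => g3 (ξf a b c, b, c)
        / (1 + (n : ℝ) * c * (G (ξf a b c, b, c)) ^ (n - 1) * g1 (ξf a b c, b, c)))
      hV (fun q hq => (key q hq).1) hp]
    exact hW.deriv
  -- the right-hand side of the goal
  have hden2 : HasDerivAt (fun s => 1 + (n : ℝ) * t * (G (ξf x s t, s, t)) ^ (n - 1)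
      * g1 (ξf x s t, s, t))
      (((n : ℝ) * t * (((n - 1 : ℕ) : ℝ) * (G (ξf x y t, y, t)) ^ (n - 1 - 1)
          * (ξ2 * g1 (ξf x y t, y, t) + g2 (ξf x y t, y, t))) * g1 (ξf x y t, y, t)
        + (n : ℝ) * t * (G (ξf x y t, y, t)) ^ (n - 1)
          * (ξ2 * D2 (1, 0, 0) (1, 0, 0) + D2 (0, 1, 0) (1, 0, 0)))) y :=
    (((hG2.pow (n - 1)).const_mul ((n : ℝ) * t)).mul hg1Φ2).const_add 1
  have hB : HasDerivAt (fun s => g2 (ξf x s t, s, t)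
      / (1 + (n : ℝ) * t * (G (ξf x s t, s, t)) ^ (n - 1) * g1 (ξf x s t, s, t)))
      (((ξ2 * D2 (1, 0, 0) (0, 1, 0) + D2 (0, 1, 0) (0, 1, 0))
          * (1 + (n : ℝ) * t * (G (ξf x y t, y, t)) ^ (n - 1) * g1 (ξf x y t, y, t))
        - g2 (ξf x y t, y, t)
          * (((n : ℝ) * t * (((n - 1 : ℕ) : ℝ) * (G (ξf x y t, y, t)) ^ (n - 1 - 1)
              * (ξ2 * g1 (ξf x y t, y, t) + g2 (ξf x y t, y, t))) * g1 (ξf x y t, y, t)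
            + (n : ℝ) * t * (G (ξf x y t, y, t)) ^ (n - 1)
              * (ξ2 * D2 (1, 0, 0) (1, 0, 0) + D2 (0, 1, 0) (1, 0, 0)))))
        / (1 + (n : ℝ) * t * (G (ξf x y t, y, t)) ^ (n - 1) * g1 (ξf x y t, y, t)) ^ 2) y :=
    hg2Φ2.div hden2 hΔ0
  have hR : pd2 (pd2 u) x y t
      = ((ξ2 * D2 (1, 0, 0) (0, 1, 0) + D2 (0, 1, 0) (0, 1, 0))
          * (1 + (n : ℝ) * t * (G (ξf x y t, y, t)) ^ (n - 1) * g1 (ξf x y t, y, t))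
        - g2 (ξf x y t, y, t)
          * (((n : ℝ) * t * (((n - 1 : ℕ) : ℝ) * (G (ξf x y t, y, t)) ^ (n - 1 - 1)
              * (ξ2 * g1 (ξf x y t, y, t) + g2 (ξf x y t, y, t))) * g1 (ξf x y t, y, t)
            + (n : ℝ) * t * (G (ξf x y t, y, t)) ^ (n - 1)
              * (ξ2 * D2 (1, 0, 0) (1, 0, 0) + D2 (0, 1, 0) (1, 0, 0)))))
        / (1 + (n : ℝ) * t * (G (ξf x y t, y, t)) ^ (n - 1) * g1 (ξf x y t, y, t)) ^ 2 := by
    rw [pd2_congr (f := pd2 u)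
      (g := fun a b c => g2 (ξf a b c, b, c)
        / (1 + (n : ℝ) * c * (G (ξf a b c, b, c)) ^ (n - 1) * g1 (ξf a b c, b, c)))
      hV (fun q hq => (key q hq).2.1) hp]
    exact hB.deriv
  -- translate the hypothesis heqF into scalar form at q0
  have hGx : HasDerivAt (fun s => G (s, y, t)) (g1 (ξf x y t, y, t)) (ξf x y t) := by
    have h0 := hd_comp1 (c := id) (s0 := ξf x y t) (hGdiff _ hq0) (hasDerivAt_id _)
    simpa [hg1def] using h0
  have hg1x : HasDerivAt (fun s => g1 (s, y, t)) (D2 (1, 0, 0) (1, 0, 0)) (ξf x y t) := by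
    have h0 := hd_comp1 (c := id) (s0 := ξf x y t) hg1fd (hasDerivAt_id _)
    simpa using h0
  have hg2x : HasDerivAt (fun s => g2 (s, y, t)) (D2 (1, 0, 0) (0, 1, 0)) (ξf x y t) := by
    have h0 := hd_comp1 (c := id) (s0 := ξf x y t) hg2fd (hasDerivAt_id _)
    simpa using h0
  have hg3x : HasDerivAt (fun s => g3 (s, y, t)) (D2 (1, 0, 0) (0, 0, 1)) (ξf x y t) := by
    have h0 := hd_comp1 (c := id) (s0 := ξf x y t) hg3fd (hasDerivAt_id _)
    simpa using h0
  have hnum : HasDerivAt (fun s => g3 (s, y, t)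
      + σ * (n : ℝ) * t * (G (s, y, t)) ^ (n - 1) * (g2 (s, y, t)) ^ 2)
      (D2 (1, 0, 0) (0, 0, 1)
        + ((σ * (n : ℝ) * t * (((n - 1 : ℕ) : ℝ) * (G (ξf x y t, y, t)) ^ (n - 1 - 1)
            * g1 (ξf x y t, y, t))) * (g2 (ξf x y t, y, t)) ^ 2
          + (σ * (n : ℝ) * t * (G (ξf x y t, y, t)) ^ (n - 1))
            * (((2 : ℕ) : ℝ) * (g2 (ξf x y t, y, t)) ^ (2 - 1) * D2 (1, 0, 0) (0, 1, 0))))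
      (ξf x y t) :=
    hg3x.add (((hGx.pow (n - 1)).const_mul (σ * (n : ℝ) * t)).mul (hg2x.pow 2))
  have hdenx : HasDerivAt (fun s => 1 + (n : ℝ) * t * (G (s, y, t)) ^ (n - 1) * g1 (s, y, t))
      (((n : ℝ) * t * (((n - 1 : ℕ) : ℝ) * (G (ξf x y t, y, t)) ^ (n - 1 - 1)
          * g1 (ξf x y t, y, t))) * g1 (ξf x y t, y, t)
        + ((n : ℝ) * t * (G (ξf x y t, y, t)) ^ (n - 1)) * D2 (1, 0, 0) (1, 0, 0))
      (ξf x y t) :=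
    (((hGx.pow (n - 1)).const_mul ((n : ℝ) * t)).mul hg1x).const_add 1
  have hquotx := hnum.div hdenx hΔ0
  have hev : (fun s => (pd3 F s y t
        + σ * (n : ℝ) * t * (F s y t) ^ (n - 1) * (pd2 F s y t) ^ 2)
      / (1 + (n : ℝ) * t * (F s y t) ^ (n - 1) * pd1 F s y t)) =ᶠ[𝓝 (ξf x y t)]
      (fun s => (g3 (s, y, t) + σ * (n : ℝ) * t * (G (s, y, t)) ^ (n - 1) * (g2 (s, y, t)) ^ 2)
        / (1 + (n : ℝ) * t * (G (s, y, t)) ^ (n - 1) * g1 (s, y, t))) := by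
    filter_upwards [mem_slice1 hU hq0] with s hs
    rw [hpd1F s y t hs, hpd2F s y t hs, hpd3F s y t hs]
  have hg2y : HasDerivAt (fun s => g2 (ξf x y t, s, t)) (D2 (0, 1, 0) (0, 1, 0)) y := by
    have h0 := hd_comp2 (c := fun _ => ξf x y t) (s0 := y) hg2fd (hasDerivAt_const y (ξf x y t))
    rwa [show ((ContinuousLinearMap.apply ℝ ℝ ((0 : ℝ), (1 : ℝ), (0 : ℝ))).comp D2)
        ((0 : ℝ), (1 : ℝ), (0 : ℝ)) = D2 (0, 1, 0) (0, 1, 0) by simp] at h0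
  have hpp : pd2 (pd2 F) (ξf x y t) y t = D2 (0, 1, 0) (0, 1, 0) := by
    rw [pd2_congr (f := pd2 F) (g := fun a b c => g2 (a, b, c)) hU
      (fun q hq => hpd2F q.1 q.2.1 q.2.2 hq) hq0]
    exact hg2y.deriv
  have hHeq : deriv (fun s => (g3 (s, y, t)
        + σ * (n : ℝ) * t * (G (s, y, t)) ^ (n - 1) * (g2 (s, y, t)) ^ 2)
      / (1 + (n : ℝ) * t * (G (s, y, t)) ^ (n - 1) * g1 (s, y, t))) (ξf x y t)
      = σ * D2 (0, 1, 0) (0, 1, 0) := by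
    rw [← hev.deriv_eq, ← hpp]
    exact heqF (ξf x y t, y, t) hq0
  simp only [Pi.div_def] at hquotx
  rw [hquotx.deriv] at hHeq
  -- solve for the second derivatives and finish by algebra
  have hξ1v : ξ1 = 1
      / (1 + (n : ℝ) * t * (G (ξf x y t, y, t)) ^ (n - 1) * g1 (ξf x y t, y, t)) := by
    rw [eq_div_iff hΔ0]; exact hs1
  have hξ2v : ξ2 = -((n : ℝ) * t * (G (ξf x y t, y, t)) ^ (n - 1) * g2 (ξf x y t, y, t))
      / (1 + (n : ℝ) * t * (G (ξf x y t, y, t)) ^ (n - 1) * g1 (ξf x y t, y, t)) := by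
    rw [eq_div_iff hΔ0]; exact hs2
  have hb31 : D2 (1, 0, 0) (0, 0, 1)
      = (σ * D2 (0, 1, 0) (0, 1, 0)
            * (1 + (n : ℝ) * t * (G (ξf x y t, y, t)) ^ (n - 1) * g1 (ξf x y t, y, t)) ^ 2
          + (g3 (ξf x y t, y, t)
              + σ * (n : ℝ) * t * (G (ξf x y t, y, t)) ^ (n - 1) * (g2 (ξf x y t, y, t)) ^ 2)
            * (((n : ℝ) * t * (((n - 1 : ℕ) : ℝ) * (G (ξf x y t, y, t)) ^ (n - 1 - 1)
                * g1 (ξf x y t, y, t))) * g1 (ξf x y t, y, t)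
              + ((n : ℝ) * t * (G (ξf x y t, y, t)) ^ (n - 1)) * D2 (1, 0, 0) (1, 0, 0)))
        / (1 + (n : ℝ) * t * (G (ξf x y t, y, t)) ^ (n - 1) * g1 (ξf x y t, y, t))
        - σ * (n : ℝ) * t * (((n - 1 : ℕ) : ℝ) * (G (ξf x y t, y, t)) ^ (n - 1 - 1)
              * g1 (ξf x y t, y, t) * (g2 (ξf x y t, y, t)) ^ 2
            + (G (ξf x y t, y, t)) ^ (n - 1)
              * (2 * g2 (ξf x y t, y, t) * D2 (1, 0, 0) (0, 1, 0))) := by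
    rw [eq_sub_iff_add_eq, eq_div_iff hΔ0]
    rw [div_eq_iff (pow_ne_zero 2 hΔ0)] at hHeq
    linear_combination hHeq
  rw [hL, hR, hb31, hsym, hξ1v, hξ2v]
  clear hL hR hb31 hsym hξ1v hξ2v hHeq hW hB hquotx hden1 hden2 hnum hdenx hG1 hG2
  clear hg1Φ1 hg3Φ1 hg1Φ2 hg2Φ2 hGx hg1x hg2x hg3x hg2y hpp hev hΞ1 hΞ2 hs1 hs2
  revert hΔ0
  generalize (G (ξf x y t, y, t)) ^ (n - 1 - 1) = A1
  generalize (G (ξf x y t, y, t)) ^ (n - 1) = A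
  generalize g1 (ξf x y t, y, t) = w1
  generalize g2 (ξf x y t, y, t) = w2
  generalize g3 (ξf x y t, y, t) = w3
  generalize D2 (1, 0, 0) (1, 0, 0) = B11
  generalize D2 (1, 0, 0) (0, 1, 0) = B12
  generalize D2 (0, 1, 0) (0, 1, 0) = B22
  generalize (((n - 1 : ℕ) : ℝ)) = C
  generalize ((n : ℕ) : ℝ) = N
  intro hΔA
  rcases hσ with h | h <;> subst h <;> field_simp <;> ring
end

section
/- Let n be a positive integer and σ = ±1. Let F(ξ, y, t) and P(ξ, y, t) be smooth real-valued functions on ℝ² × [0, T] with P_ξ = F_yy and F_t = σ((1 + t n F^{n−1} F_ξ) P − t n F^{n−1} F_y²). Assume that for each t ∈ [0, T] the functions F(·, ·, t), P(·, ·, t) and all their partial derivatives are Schwartz functions on ℝ², and that differentiation under the integral sign in t is justified. Then the L² norm of F is conserved: the function t ↦ ∫_{ℝ²} F(ξ, y, t)² dξ dy is constant on [0, T]. -/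
open MeasureTheory

open SchwartzMap Filter Set

noncomputable def D1 (φ : SchwartzMap (ℝ × ℝ) ℝ) : SchwartzMap (ℝ × ℝ) ℝ :=
  LineDeriv.lineDerivOp ((1:ℝ), (0:ℝ)) φ

noncomputable def D2 (φ : SchwartzMap (ℝ × ℝ) ℝ) : SchwartzMap (ℝ × ℝ) ℝ :=
  LineDeriv.lineDerivOp ((0:ℝ), (1:ℝ)) φ

lemma schwartz_bounded (φ : SchwartzMap (ℝ × ℝ) ℝ) :
    ∃ B : ℝ, 0 < B ∧ ∀ p : ℝ × ℝ, ‖φ p‖ ≤ B := by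
  obtain ⟨C, hC, h⟩ := φ.decay 0 0
  exact ⟨C, hC, fun p => by simpa [norm_iteratedFDeriv_zero] using h p⟩

lemma schwartz_decay_fst (φ : SchwartzMap (ℝ × ℝ) ℝ) :
    ∃ C : ℝ, 0 < C ∧ ∀ p : ℝ × ℝ, ‖φ p‖ ≤ C * (1 + p.1 ^ 2)⁻¹ := by
  obtain ⟨C0, hC0, h0⟩ := φ.decay 0 0
  obtain ⟨C2, hC2, h2⟩ := φ.decay 2 0
  refine ⟨C0 + C2, by positivity, fun p => ?_⟩
  rw [← div_eq_mul_inv, le_div_iff₀ (by positivity)]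
  have h0' : ‖φ p‖ ≤ C0 := by simpa [norm_iteratedFDeriv_zero] using h0 p
  have h2' : ‖p‖ ^ 2 * ‖φ p‖ ≤ C2 := by simpa [norm_iteratedFDeriv_zero] using h2 p
  have hp : p.1 ^ 2 ≤ ‖p‖ ^ 2 := by
    have h1 : |p.1| ≤ ‖p‖ := by simpa [Real.norm_eq_abs] using norm_fst_le p
    calc p.1 ^ 2 = |p.1| ^ 2 := (sq_abs _).symm
    _ ≤ ‖p‖ ^ 2 := by nlinarith [abs_nonneg p.1]
  nlinarith [norm_nonneg (φ p)]

lemma schwartz_decay_snd (φ : SchwartzMap (ℝ × ℝ) ℝ) :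
    ∃ C : ℝ, 0 < C ∧ ∀ p : ℝ × ℝ, ‖φ p‖ ≤ C * (1 + p.2 ^ 2)⁻¹ := by
  obtain ⟨C0, hC0, h0⟩ := φ.decay 0 0
  obtain ⟨C2, hC2, h2⟩ := φ.decay 2 0
  refine ⟨C0 + C2, by positivity, fun p => ?_⟩
  rw [← div_eq_mul_inv, le_div_iff₀ (by positivity)]
  have h0' : ‖φ p‖ ≤ C0 := by simpa [norm_iteratedFDeriv_zero] using h0 p
  have h2' : ‖p‖ ^ 2 * ‖φ p‖ ≤ C2 := by simpa [norm_iteratedFDeriv_zero] using h2 p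
  have hp : p.2 ^ 2 ≤ ‖p‖ ^ 2 := by
    have h1 : |p.2| ≤ ‖p‖ := by simpa [Real.norm_eq_abs] using norm_snd_le p
    calc p.2 ^ 2 = |p.2| ^ 2 := (sq_abs _).symm
    _ ≤ ‖p‖ ^ 2 := by nlinarith [abs_nonneg p.2]
  nlinarith [norm_nonneg (φ p)]

lemma hasDerivAt_fst (φ : SchwartzMap (ℝ × ℝ) ℝ) (ξ y : ℝ) :
    HasDerivAt (fun s => φ (s, y)) (D1 φ (ξ, y)) ξ := by
  have h1 : HasFDerivAt φ (fderiv ℝ φ (ξ, y)) (ξ, y) :=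
    (((φ.smooth 1).differentiable (by simp)) (ξ, y)).hasFDerivAt
  have h2 : HasDerivAt (fun s : ℝ => (s, y)) ((1:ℝ), (0:ℝ)) ξ :=
    (hasDerivAt_id ξ).prodMk (hasDerivAt_const ξ y)
  have := h1.comp_hasDerivAt ξ h2
  rw [D1, SchwartzMap.lineDerivOp_apply_eq_fderiv]
  exact this

lemma hasDerivAt_snd (φ : SchwartzMap (ℝ × ℝ) ℝ) (ξ y : ℝ) :
    HasDerivAt (fun s => φ (ξ, s)) (D2 φ (ξ, y)) y := by
  have h1 : HasFDerivAt φ (fderiv ℝ φ (ξ, y)) (ξ, y) :=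
    (((φ.smooth 1).differentiable (by simp)) (ξ, y)).hasFDerivAt
  have h2 : HasDerivAt (fun s : ℝ => (ξ, s)) ((0:ℝ), (1:ℝ)) y :=
    (hasDerivAt_const y ξ).prodMk (hasDerivAt_id y)
  have := h1.comp_hasDerivAt y h2
  rw [D2, SchwartzMap.lineDerivOp_apply_eq_fderiv]
  exact this

lemma integrable_of_decay {h : ℝ → ℝ} (hc : Continuous h) (C : ℝ)
    (hb : ∀ s : ℝ, ‖h s‖ ≤ C * (1 + s ^ 2)⁻¹) : Integrable h := by
  refine (integrable_inv_one_add_sq.const_mul C).mono' hc.aestronglyMeasurable ?_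
  exact Filter.Eventually.of_forall fun s => hb s

lemma tendsto_of_decay_atTop {h : ℝ → ℝ} (C : ℝ)
    (hb : ∀ s : ℝ, ‖h s‖ ≤ C * (1 + s ^ 2)⁻¹) : Tendsto h atTop (nhds 0) := by
  apply squeeze_zero_norm hb
  have h1 : Tendsto (fun s : ℝ => 1 + s ^ 2) atTop atTop :=
    tendsto_atTop_add_const_left _ 1 (tendsto_pow_atTop two_ne_zero)
  simpa [mul_zero] using (h1.inv_tendsto_atTop).const_mul C

lemma tendsto_of_decay_atBot {h : ℝ → ℝ} (C : ℝ)
    (hb : ∀ s : ℝ, ‖h s‖ ≤ C * (1 + s ^ 2)⁻¹) : Tendsto h atBot (nhds 0) := by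
  apply squeeze_zero_norm hb
  have h1 : Tendsto (fun s : ℝ => 1 + s ^ 2) atBot atTop := by
    apply tendsto_atTop_add_const_left
    have : Tendsto (fun s : ℝ => (-s) ^ 2) atBot atTop :=
      (tendsto_pow_atTop two_ne_zero).comp tendsto_neg_atBot_atTop
    simpa [neg_sq] using this
  simpa [mul_zero] using (h1.inv_tendsto_atTop).const_mul C

lemma integral_deriv_eq_zero {h h' : ℝ → ℝ} (hd : ∀ x, HasDerivAt h (h' x) x)
    (hi : Integrable h') (hbot : Tendsto h atBot (nhds 0)) (htop : Tendsto h atTop (nhds 0)) :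
    ∫ x, h' x = 0 := by
  simpa using integral_of_hasDerivAt_of_tendsto hd hi hbot htop

lemma bound_mul_decay {u v : ℝ → ℝ} {B C : ℝ} (hB : 0 ≤ B)
    (hub : ∀ s, ‖u s‖ ≤ B) (hvb : ∀ s, ‖v s‖ ≤ C * (1 + s ^ 2)⁻¹) :
    ∀ s, ‖u s * v s‖ ≤ B * C * (1 + s ^ 2)⁻¹ := by
  intro s
  rw [norm_mul, mul_assoc]
  exact mul_le_mul (hub s) (hvb s) (norm_nonneg _) hB

/-- Product of a bounded (a.e. strongly measurable) function with a Schwartz function is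
integrable on `ℝ × ℝ`. -/
lemma integrable_bdd_mul_schwartz {u : ℝ × ℝ → ℝ} (hu : AEStronglyMeasurable u volume)
    {B : ℝ} (hub : ∀ p, ‖u p‖ ≤ B) (ψ : SchwartzMap (ℝ × ℝ) ℝ) :
    Integrable (fun q => u q * ψ q) := by
  refine ((ψ.integrable (μ := volume)).norm.const_mul B).mono'
    (hu.mul ψ.continuous.aestronglyMeasurable) (Filter.Eventually.of_forall fun q => ?_)
  rw [norm_mul]
  exact mul_le_mul_of_nonneg_right (hub q) (norm_nonneg _)

noncomputable def Gint (f : SchwartzMap (ℝ × ℝ) ℝ) (ξ y : ℝ) : ℝ := ∫ s in Iic ξ, f (s, y)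

lemma integrable_sec_fst (f : SchwartzMap (ℝ × ℝ) ℝ) (y : ℝ) :
    Integrable (fun s => f (s, y)) := by
  obtain ⟨C, hC, hb⟩ := schwartz_decay_fst f
  exact integrable_of_decay (f.continuous.comp (continuous_id.prodMk continuous_const)) C
    (fun s => hb (s, y))

lemma integrable_sec_snd (f : SchwartzMap (ℝ × ℝ) ℝ) (ξ : ℝ) :
    Integrable (fun s => f (ξ, s)) := by
  obtain ⟨C, hC, hb⟩ := schwartz_decay_snd f
  exact integrable_of_decay (f.continuous.comp (continuous_const.prodMk continuous_id)) C
    (fun s => hb (ξ, s))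

lemma Gint_bound (f : SchwartzMap (ℝ × ℝ) ℝ) :
    ∃ M : ℝ, 0 < M ∧ ∀ ξ y : ℝ, ‖Gint f ξ y‖ ≤ M := by
  obtain ⟨C, hC, hb⟩ := schwartz_decay_fst f
  refine ⟨∫ s : ℝ, C * (1 + s ^ 2)⁻¹, ?_, fun ξ y => ?_⟩
  · rw [integral_const_mul]
    have : (0:ℝ) < ∫ s : ℝ, (1 + s ^ 2)⁻¹ := by
      rw [integral_univ_inv_one_add_sq]; positivity
    positivity
  · calc ‖Gint f ξ y‖ ≤ ∫ s in Iic ξ, ‖f (s, y)‖ := norm_integral_le_integral_norm _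
    _ ≤ ∫ s in Iic ξ, C * (1 + s ^ 2)⁻¹ := by
        apply integral_mono ((integrable_sec_fst f y).norm.restrict)
          ((integrable_inv_one_add_sq.const_mul C).restrict)
        exact fun s => hb (s, y)
    _ ≤ ∫ s : ℝ, C * (1 + s ^ 2)⁻¹ := by
        apply setIntegral_le_integral (integrable_inv_one_add_sq.const_mul C)
        exact Filter.Eventually.of_forall fun s => by positivity

lemma Gint_hasDerivAt_fst (f : SchwartzMap (ℝ × ℝ) ℝ) (y ξ : ℝ) :
    HasDerivAt (fun x => Gint f x y) (f (ξ, y)) ξ := by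
  have key : ∀ x : ℝ, Gint f x y = Gint f 0 y + ∫ s in (0:ℝ)..x, f (s, y) := by
    intro x
    rw [← intervalIntegral.integral_Iic_sub_Iic ((integrable_sec_fst f y).integrableOn)
      ((integrable_sec_fst f y).integrableOn)]
    unfold Gint; ring
  have hd : HasDerivAt (fun x => Gint f 0 y + ∫ s in (0:ℝ)..x, f (s, y)) (f (ξ, y)) ξ := by
    apply HasDerivAt.const_add
    exact intervalIntegral.integral_hasDerivAt_right
      ((integrable_sec_fst f y).intervalIntegrable)
      ((f.continuous.comp (continuous_id.prodMk continuous_const)).stronglyMeasurableAtFilter _ _)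
      ((f.continuous.comp (continuous_id.prodMk continuous_const)).continuousAt)
  exact hd.congr_of_eventuallyEq (Filter.Eventually.of_forall key)

lemma Gint_hasDerivAt_snd (f : SchwartzMap (ℝ × ℝ) ℝ) (ξ y : ℝ) :
    HasDerivAt (fun z => Gint f ξ z) (Gint (D2 f) ξ y) y := by
  obtain ⟨C, hC, hb⟩ := schwartz_decay_fst (D2 f)
  have := hasDerivAt_integral_of_dominated_loc_of_deriv_le
    (μ := volume.restrict (Iic ξ)) (x₀ := y)
    (F := fun z s => f (s, z)) (F' := fun z s => D2 f (s, z))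
    (s := Set.univ) (bound := fun s => C * (1 + s ^ 2)⁻¹) Filter.univ_mem
    (Filter.Eventually.of_forall fun z =>
      ((f.continuous.comp (continuous_id.prodMk continuous_const)).aestronglyMeasurable))
    ((integrable_sec_fst f y).restrict)
    (((D2 f).continuous.comp (continuous_id.prodMk continuous_const)).aestronglyMeasurable)
    (Filter.Eventually.of_forall fun s => fun z _ => hb (s, z))
    ((integrable_inv_one_add_sq.const_mul C).restrict)
    (Filter.Eventually.of_forall fun s => fun z _ => hasDerivAt_snd f s z)
  exact this.2

/-- FTC on `Iic`: the `Iic`-integral of `D1 g` recovers `g`. -/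
lemma Gint_D1 (g : SchwartzMap (ℝ × ℝ) ℝ) (ξ y : ℝ) :
    Gint (D1 g) ξ y = g (ξ, y) := by
  obtain ⟨C, hC, hb⟩ := schwartz_decay_fst g
  have := integral_Iic_of_hasDerivAt_of_tendsto (f := fun s => g (s, y))
    (f' := fun s => D1 g (s, y)) (a := ξ) (m := 0)
    ((g.continuous.comp (continuous_id.prodMk continuous_const)).continuousWithinAt)
    (fun x _ => hasDerivAt_fst g x y)
    ((integrable_sec_fst (D1 g) y).integrableOn)
    (tendsto_of_decay_atBot C (fun s => hb (s, y)))
  simpa [Gint] using this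

lemma Gint_aestronglyMeasurable (f : SchwartzMap (ℝ × ℝ) ℝ) :
    AEStronglyMeasurable (fun q : ℝ × ℝ => Gint f q.1 q.2) volume := by
  have hH : StronglyMeasurable fun r : (ℝ × ℝ) × ℝ =>
      if r.2 ≤ r.1.1 then f (r.2, r.1.2) else 0 := by
    apply Measurable.stronglyMeasurable
    apply Measurable.ite
    · exact measurableSet_le measurable_snd (measurable_fst.comp measurable_fst)
    · exact f.continuous.measurable.comp
        (measurable_snd.prodMk ((measurable_snd.comp measurable_fst)))
    · exact measurable_const
  have := StronglyMeasurable.integral_prod_right' (ν := volume) hH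
  apply StronglyMeasurable.aestronglyMeasurable
  have heq : (fun q : ℝ × ℝ => Gint f q.1 q.2)
      = fun q : ℝ × ℝ => ∫ s : ℝ, if s ≤ q.1 then f (s, q.2) else 0 := by
    funext q
    rw [Gint, ← integral_indicator measurableSet_Iic]
    simp only [Set.indicator_apply, Set.mem_Iic]
  rw [heq]
  exact this

lemma cont_sec_fst (ψ : SchwartzMap (ℝ × ℝ) ℝ) (y : ℝ) : Continuous fun s => ψ (s, y) :=
  ψ.continuous.comp (continuous_id.prodMk continuous_const)

lemma cont_sec_snd (ψ : SchwartzMap (ℝ × ℝ) ℝ) (ξ : ℝ) : Continuous fun s => ψ (ξ, s) :=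
  ψ.continuous.comp (continuous_const.prodMk continuous_id)

lemma key1 (f g : SchwartzMap (ℝ × ℝ) ℝ) (hgξ : ∀ p : ℝ × ℝ, D1 g p = D2 (D2 f) p) :
    ∫ q : ℝ × ℝ, f q * g q = 0 := by
  obtain ⟨Bf, hBf, hBfb⟩ := schwartz_bounded f
  obtain ⟨Bg, hBg, hBgb⟩ := schwartz_bounded g
  obtain ⟨Cg1, hCg1, hCg1b⟩ := schwartz_decay_fst g
  obtain ⟨C22, hC22, hC22b⟩ := schwartz_decay_fst (D2 (D2 f))
  obtain ⟨C22', hC22', hC22b'⟩ := schwartz_decay_snd (D2 (D2 f))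
  obtain ⟨C2', hC2'pos, hC2b'⟩ := schwartz_decay_snd (D2 f)
  obtain ⟨Cf', hCf', hCfb'⟩ := schwartz_decay_snd f
  obtain ⟨M, hM, hMb⟩ := Gint_bound f
  obtain ⟨M2, hM2, hM2b⟩ := Gint_bound (D2 f)
  have hGcont1 : ∀ y, Continuous (fun x => Gint f x y) := fun y =>
    continuous_iff_continuousAt.2 fun x => (Gint_hasDerivAt_fst f y x).continuousAt
  have hGcont2 : ∀ ξ, Continuous (fun z => Gint f ξ z) := fun ξ =>
    continuous_iff_continuousAt.2 fun z => (Gint_hasDerivAt_snd f ξ z).continuousAt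
  have hGycont2 : ∀ ξ, Continuous (fun z => Gint (D2 f) ξ z) := fun ξ =>
    continuous_iff_continuousAt.2 fun z => (Gint_hasDerivAt_snd (D2 f) ξ z).continuousAt
  -- integrability on ℝ²
  have hint_fg : Integrable (fun q : ℝ × ℝ => f q * g q) :=
    integrable_bdd_mul_schwartz f.continuous.aestronglyMeasurable hBfb g
  have hint_Gf22 : Integrable (fun q : ℝ × ℝ => Gint f q.1 q.2 * D2 (D2 f) q) :=
    integrable_bdd_mul_schwartz (Gint_aestronglyMeasurable f)
      (fun p => hMb p.1 p.2) (D2 (D2 f))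
  have hint_gf : Integrable (fun q : ℝ × ℝ => g q * f q) :=
    integrable_bdd_mul_schwartz g.continuous.aestronglyMeasurable hBgb f
  -- Step C : integration by parts in ξ, for every fixed y
  have stepC : ∀ y : ℝ, ∫ ξ : ℝ, f (ξ, y) * g (ξ, y)
      = - ∫ ξ : ℝ, Gint f ξ y * D2 (D2 f) (ξ, y) := by
    intro y
    have hA : Integrable (fun ξ => f (ξ, y) * g (ξ, y)) :=
      integrable_of_decay ((cont_sec_fst f y).mul (cont_sec_fst g y)) (Bf * Cg1)
        (bound_mul_decay hBf.le (fun s => hBfb (s, y)) (fun s => hCg1b (s, y)))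
    have hB : Integrable (fun ξ => Gint f ξ y * D2 (D2 f) (ξ, y)) :=
      integrable_of_decay ((hGcont1 y).mul (cont_sec_fst (D2 (D2 f)) y)) (M * C22)
        (bound_mul_decay hM.le (fun s => hMb s y) (fun s => hC22b (s, y)))
    have hd : ∀ ξ, HasDerivAt (fun x => Gint f x y * g (x, y))
        (f (ξ, y) * g (ξ, y) + Gint f ξ y * D2 (D2 f) (ξ, y)) ξ := by
      intro ξ
      have h := (Gint_hasDerivAt_fst f y ξ).mul (hasDerivAt_fst g ξ y)
      rwa [hgξ (ξ, y)] at h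
    have h0 : ∫ ξ : ℝ, (f (ξ, y) * g (ξ, y) + Gint f ξ y * D2 (D2 f) (ξ, y)) = 0 :=
      integral_deriv_eq_zero hd (hA.add hB)
        (tendsto_of_decay_atBot (M * Cg1)
          (bound_mul_decay hM.le (fun s => hMb s y) (fun s => hCg1b (s, y))))
        (tendsto_of_decay_atTop (M * Cg1)
          (bound_mul_decay hM.le (fun s => hMb s y) (fun s => hCg1b (s, y))))
    rw [integral_add hA hB] at h0
    linarith
  -- Step D : first integration by parts in y, for every fixed ξ
  have stepD : ∀ ξ : ℝ, ∫ y : ℝ, Gint f ξ y * D2 (D2 f) (ξ, y)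
      = - ∫ y : ℝ, Gint (D2 f) ξ y * D2 f (ξ, y) := by
    intro ξ
    have hA : Integrable (fun y => Gint f ξ y * D2 (D2 f) (ξ, y)) :=
      integrable_of_decay ((hGcont2 ξ).mul (cont_sec_snd (D2 (D2 f)) ξ)) (M * C22')
        (bound_mul_decay hM.le (fun s => hMb ξ s) (fun s => hC22b' (ξ, s)))
    have hB : Integrable (fun y => Gint (D2 f) ξ y * D2 f (ξ, y)) :=
      integrable_of_decay ((hGycont2 ξ).mul (cont_sec_snd (D2 f) ξ)) (M2 * C2')
        (bound_mul_decay hM2.le (fun s => hM2b ξ s) (fun s => hC2b' (ξ, s)))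
    have hd : ∀ y, HasDerivAt (fun z => Gint f ξ z * D2 f (ξ, z))
        (Gint (D2 f) ξ y * D2 f (ξ, y) + Gint f ξ y * D2 (D2 f) (ξ, y)) y := fun y =>
      (Gint_hasDerivAt_snd f ξ y).mul (hasDerivAt_snd (D2 f) ξ y)
    have h0 : ∫ y : ℝ,
        (Gint (D2 f) ξ y * D2 f (ξ, y) + Gint f ξ y * D2 (D2 f) (ξ, y)) = 0 :=
      integral_deriv_eq_zero hd (hB.add hA)
        (tendsto_of_decay_atBot (M * C2')
          (bound_mul_decay hM.le (fun s => hMb ξ s) (fun s => hC2b' (ξ, s))))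
        (tendsto_of_decay_atTop (M * C2')
          (bound_mul_decay hM.le (fun s => hMb ξ s) (fun s => hC2b' (ξ, s))))
    rw [integral_add hB hA] at h0
    linarith
  -- derivative of Gint (D2 f) in y is g
  have hGyd : ∀ ξ y : ℝ, HasDerivAt (fun z => Gint (D2 f) ξ z) (g (ξ, y)) y := by
    intro ξ y
    have h := Gint_hasDerivAt_snd (D2 f) ξ y
    have heq : Gint (D2 (D2 f)) ξ y = g (ξ, y) := by
      rw [← Gint_D1 g ξ y]
      unfold Gint
      exact integral_congr_ae (Filter.Eventually.of_forall fun s => (hgξ (s, y)).symm)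
    rwa [heq] at h
  -- Step E : second integration by parts in y
  have stepE : ∀ ξ : ℝ, ∫ y : ℝ, Gint (D2 f) ξ y * D2 f (ξ, y)
      = - ∫ y : ℝ, g (ξ, y) * f (ξ, y) := by
    intro ξ
    have hA : Integrable (fun y => Gint (D2 f) ξ y * D2 f (ξ, y)) :=
      integrable_of_decay ((hGycont2 ξ).mul (cont_sec_snd (D2 f) ξ)) (M2 * C2')
        (bound_mul_decay hM2.le (fun s => hM2b ξ s) (fun s => hC2b' (ξ, s)))
    have hB : Integrable (fun y => g (ξ, y) * f (ξ, y)) :=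
      integrable_of_decay ((cont_sec_snd g ξ).mul (cont_sec_snd f ξ)) (Bg * Cf')
        (bound_mul_decay hBg.le (fun s => hBgb (ξ, s)) (fun s => hCfb' (ξ, s)))
    have hd : ∀ y, HasDerivAt (fun z => Gint (D2 f) ξ z * f (ξ, z))
        (g (ξ, y) * f (ξ, y) + Gint (D2 f) ξ y * D2 f (ξ, y)) y := fun y =>
      (hGyd ξ y).mul (hasDerivAt_snd f ξ y)
    have h0 : ∫ y : ℝ,
        (g (ξ, y) * f (ξ, y) + Gint (D2 f) ξ y * D2 f (ξ, y)) = 0 :=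
      integral_deriv_eq_zero hd (hB.add hA)
        (tendsto_of_decay_atBot (M2 * Cf')
          (bound_mul_decay hM2.le (fun s => hM2b ξ s) (fun s => hCfb' (ξ, s))))
        (tendsto_of_decay_atTop (M2 * Cf')
          (bound_mul_decay hM2.le (fun s => hM2b ξ s) (fun s => hCfb' (ξ, s))))
    rw [integral_add hB hA] at h0
    linarith
  -- assemble via Fubini
  have h1 : ∫ q : ℝ × ℝ, f q * g q = ∫ y : ℝ, ∫ ξ : ℝ, f (ξ, y) * g (ξ, y) :=
    integral_prod_symm _ hint_fg
  have h2 : ∫ q : ℝ × ℝ, Gint f q.1 q.2 * D2 (D2 f) q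
      = ∫ y : ℝ, ∫ ξ : ℝ, Gint f ξ y * D2 (D2 f) (ξ, y) := integral_prod_symm _ hint_Gf22
  have h3 : ∫ q : ℝ × ℝ, Gint f q.1 q.2 * D2 (D2 f) q
      = ∫ ξ : ℝ, ∫ y : ℝ, Gint f ξ y * D2 (D2 f) (ξ, y) := integral_prod _ hint_Gf22
  have h4 : ∫ q : ℝ × ℝ, g q * f q = ∫ ξ : ℝ, ∫ y : ℝ, g (ξ, y) * f (ξ, y) :=
    integral_prod _ hint_gf
  have key : ∫ q : ℝ × ℝ, f q * g q = - ∫ q : ℝ × ℝ, f q * g q := by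
    calc ∫ q : ℝ × ℝ, f q * g q
        = ∫ y : ℝ, ∫ ξ : ℝ, f (ξ, y) * g (ξ, y) := h1
      _ = ∫ y : ℝ, -∫ ξ : ℝ, Gint f ξ y * D2 (D2 f) (ξ, y) :=
          integral_congr_ae (Filter.Eventually.of_forall fun y => stepC y)
      _ = - ∫ y : ℝ, ∫ ξ : ℝ, Gint f ξ y * D2 (D2 f) (ξ, y) := integral_neg _
      _ = - ∫ q : ℝ × ℝ, Gint f q.1 q.2 * D2 (D2 f) q := by rw [h2]
      _ = - ∫ ξ : ℝ, ∫ y : ℝ, Gint f ξ y * D2 (D2 f) (ξ, y) := by rw [h3]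
      _ = - ∫ ξ : ℝ, -∫ y : ℝ, Gint (D2 f) ξ y * D2 f (ξ, y) := by
          rw [integral_congr_ae (Filter.Eventually.of_forall fun ξ => stepD ξ)]
      _ = ∫ ξ : ℝ, ∫ y : ℝ, Gint (D2 f) ξ y * D2 f (ξ, y) := by
          rw [integral_neg]; ring
      _ = ∫ ξ : ℝ, -∫ y : ℝ, g (ξ, y) * f (ξ, y) :=
          integral_congr_ae (Filter.Eventually.of_forall fun ξ => stepE ξ)
      _ = - ∫ ξ : ℝ, ∫ y : ℝ, g (ξ, y) * f (ξ, y) := integral_neg _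
      _ = - ∫ q : ℝ × ℝ, g q * f q := by rw [h4]
      _ = - ∫ q : ℝ × ℝ, f q * g q := by
          congr 1
          exact integral_congr_ae (Filter.Eventually.of_forall fun q => mul_comm _ _)
  linarith

lemma key2 (f g : SchwartzMap (ℝ × ℝ) ℝ) (hgξ : ∀ p : ℝ × ℝ, D1 g p = D2 (D2 f) p)
    (n : ℕ) :
    ∫ q : ℝ × ℝ, f q ^ n * D1 f q * g q = ∫ q : ℝ × ℝ, f q ^ n * D2 f q ^ 2 := by
  obtain ⟨Bf, hBf, hBfb⟩ := schwartz_bounded f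
  obtain ⟨B1, hB1, hB1b⟩ := schwartz_bounded (D1 f)
  obtain ⟨B2, hB2, hB2b⟩ := schwartz_bounded (D2 f)
  obtain ⟨Cg1, hCg1, hCg1b⟩ := schwartz_decay_fst g
  obtain ⟨C22, hC22, hC22b⟩ := schwartz_decay_fst (D2 (D2 f))
  obtain ⟨C22', hC22', hC22b'⟩ := schwartz_decay_snd (D2 (D2 f))
  obtain ⟨C2', hC2', hC2b'⟩ := schwartz_decay_snd (D2 f)
  -- pointwise bounds for products
  have hbfn : ∀ p : ℝ × ℝ, ‖f p ^ n * D1 f p‖ ≤ Bf ^ n * B1 := by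
    intro p
    rw [norm_mul, norm_pow]
    exact mul_le_mul (pow_le_pow_left₀ (norm_nonneg _) (hBfb p) n) (hB1b p) (norm_nonneg _)
      (by positivity)
  have hbfn2 : ∀ p : ℝ × ℝ, ‖f p ^ n * D2 f p‖ ≤ Bf ^ n * B2 := by
    intro p
    rw [norm_mul, norm_pow]
    exact mul_le_mul (pow_le_pow_left₀ (norm_nonneg _) (hBfb p) n) (hB2b p) (norm_nonneg _)
      (by positivity)
  have hbfn1 : ∀ p : ℝ × ℝ, ‖f p ^ (n + 1)‖ ≤ Bf ^ (n + 1) := by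
    intro p
    rw [norm_pow]
    exact pow_le_pow_left₀ (norm_nonneg _) (hBfb p) _
  -- global integrability
  have hintB : Integrable (fun q : ℝ × ℝ => f q ^ n * D1 f q * g q) := by
    have := integrable_bdd_mul_schwartz
      (u := fun q : ℝ × ℝ => f q ^ n * D1 f q)
      (((f.continuous.pow n).mul (D1 f).continuous).aestronglyMeasurable) hbfn g
    exact this
  have hintC : Integrable (fun q : ℝ × ℝ => f q ^ n * D2 f q ^ 2) := by
    have := integrable_bdd_mul_schwartz
      (u := fun q : ℝ × ℝ => f q ^ n * D2 f q)
      (((f.continuous.pow n).mul (D2 f).continuous).aestronglyMeasurable) hbfn2 (D2 f)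
    exact this.congr (Filter.Eventually.of_forall fun q => by ring)
  have hintD : Integrable (fun q : ℝ × ℝ => f q ^ (n + 1) * D2 (D2 f) q) := by
    exact integrable_bdd_mul_schwartz
      (u := fun q : ℝ × ℝ => f q ^ (n + 1))
      ((f.continuous.pow (n + 1)).aestronglyMeasurable) hbfn1 (D2 (D2 f))
  -- Step A : integration by parts in ξ, fixed y
  have stepA : ∀ y : ℝ, ((n : ℝ) + 1) * ∫ ξ : ℝ, f (ξ, y) ^ n * D1 f (ξ, y) * g (ξ, y)
      = - ∫ ξ : ℝ, f (ξ, y) ^ (n + 1) * D2 (D2 f) (ξ, y) := by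
    intro y
    have hA : Integrable (fun ξ => f (ξ, y) ^ n * D1 f (ξ, y) * g (ξ, y)) :=
      integrable_of_decay (((cont_sec_fst f y).pow n).mul ((cont_sec_fst (D1 f) y)) |>.mul
        (cont_sec_fst g y)) (Bf ^ n * B1 * Cg1)
        (bound_mul_decay (by positivity) (fun s => hbfn (s, y)) (fun s => hCg1b (s, y)))
    have hB : Integrable (fun ξ => f (ξ, y) ^ (n + 1) * D2 (D2 f) (ξ, y)) :=
      integrable_of_decay (((cont_sec_fst f y).pow (n + 1)).mul
        (cont_sec_fst (D2 (D2 f)) y)) (Bf ^ (n + 1) * C22)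
        (bound_mul_decay (by positivity) (fun s => hbfn1 (s, y)) (fun s => hC22b (s, y)))
    have hd : ∀ ξ, HasDerivAt (fun x => f (x, y) ^ (n + 1) * g (x, y))
        (((n : ℝ) + 1) * (f (ξ, y) ^ n * D1 f (ξ, y) * g (ξ, y))
          + f (ξ, y) ^ (n + 1) * D2 (D2 f) (ξ, y)) ξ := by
      intro ξ
      have h := ((hasDerivAt_fst f ξ y).fun_pow (n + 1)).fun_mul (hasDerivAt_fst g ξ y)
      rw [hgξ (ξ, y)] at h
      refine h.congr_deriv ?_
      simp only [Nat.add_sub_cancel]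
      push_cast
      ring
    have h0 : ∫ ξ : ℝ, (((n : ℝ) + 1) * (f (ξ, y) ^ n * D1 f (ξ, y) * g (ξ, y))
        + f (ξ, y) ^ (n + 1) * D2 (D2 f) (ξ, y)) = 0 :=
      integral_deriv_eq_zero hd ((hA.const_mul _).add hB)
        (tendsto_of_decay_atBot (Bf ^ (n + 1) * Cg1)
          (bound_mul_decay (by positivity) (fun s => hbfn1 (s, y)) (fun s => hCg1b (s, y))))
        (tendsto_of_decay_atTop (Bf ^ (n + 1) * Cg1)
          (bound_mul_decay (by positivity) (fun s => hbfn1 (s, y)) (fun s => hCg1b (s, y))))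
    rw [integral_add (hA.const_mul _) hB, integral_const_mul] at h0
    linarith
  -- Step B : integration by parts in y, fixed ξ
  have stepB : ∀ ξ : ℝ, ∫ y : ℝ, f (ξ, y) ^ (n + 1) * D2 (D2 f) (ξ, y)
      = -(((n : ℝ) + 1) * ∫ y : ℝ, f (ξ, y) ^ n * D2 f (ξ, y) ^ 2) := by
    intro ξ
    have hbsq : ∀ s : ℝ, ‖f (ξ, s) ^ n * D2 f (ξ, s) * D2 f (ξ, s)‖
        ≤ Bf ^ n * B2 * (C2' * (1 + s ^ 2)⁻¹) := by
      intro s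
      rw [norm_mul]
      exact mul_le_mul (hbfn2 (ξ, s)) (hC2b' (ξ, s)) (norm_nonneg _) (by positivity)
    have hA : Integrable (fun y => f (ξ, y) ^ n * D2 f (ξ, y) ^ 2) := by
      have : Integrable (fun y => f (ξ, y) ^ n * D2 f (ξ, y) * D2 f (ξ, y)) :=
        integrable_of_decay ((((cont_sec_snd f ξ).pow n).mul
          (cont_sec_snd (D2 f) ξ)).mul (cont_sec_snd (D2 f) ξ)) (Bf ^ n * B2 * C2')
          (fun s => by simpa [mul_assoc] using hbsq s)
      exact this.congr (Filter.Eventually.of_forall fun y => by ring)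
    have hB : Integrable (fun y => f (ξ, y) ^ (n + 1) * D2 (D2 f) (ξ, y)) :=
      integrable_of_decay (((cont_sec_snd f ξ).pow (n + 1)).mul
        (cont_sec_snd (D2 (D2 f)) ξ)) (Bf ^ (n + 1) * C22')
        (bound_mul_decay (by positivity) (fun s => hbfn1 (ξ, s)) (fun s => hC22b' (ξ, s)))
    have hd : ∀ y, HasDerivAt (fun z => f (ξ, z) ^ (n + 1) * D2 f (ξ, z))
        (((n : ℝ) + 1) * (f (ξ, y) ^ n * D2 f (ξ, y) ^ 2)
          + f (ξ, y) ^ (n + 1) * D2 (D2 f) (ξ, y)) y := by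
      intro y
      have h := ((hasDerivAt_snd f ξ y).fun_pow (n + 1)).fun_mul (hasDerivAt_snd (D2 f) ξ y)
      refine h.congr_deriv ?_
      simp only [Nat.add_sub_cancel]
      push_cast
      ring
    have h0 : ∫ y : ℝ, (((n : ℝ) + 1) * (f (ξ, y) ^ n * D2 f (ξ, y) ^ 2)
        + f (ξ, y) ^ (n + 1) * D2 (D2 f) (ξ, y)) = 0 :=
      integral_deriv_eq_zero hd ((hA.const_mul _).add hB)
        (tendsto_of_decay_atBot (Bf ^ (n + 1) * C2')
          (bound_mul_decay (by positivity) (fun s => hbfn1 (ξ, s)) (fun s => hC2b' (ξ, s))))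
        (tendsto_of_decay_atTop (Bf ^ (n + 1) * C2')
          (bound_mul_decay (by positivity) (fun s => hbfn1 (ξ, s)) (fun s => hC2b' (ξ, s))))
    rw [integral_add (hA.const_mul _) hB, integral_const_mul] at h0
    linarith
  -- assemble via Fubini
  have h1 : ∫ q : ℝ × ℝ, f q ^ n * D1 f q * g q
      = ∫ y : ℝ, ∫ ξ : ℝ, f (ξ, y) ^ n * D1 f (ξ, y) * g (ξ, y) :=
    integral_prod_symm _ hintB
  have h2 : ∫ q : ℝ × ℝ, f q ^ (n + 1) * D2 (D2 f) q
      = ∫ y : ℝ, ∫ ξ : ℝ, f (ξ, y) ^ (n + 1) * D2 (D2 f) (ξ, y) := integral_prod_symm _ hintD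
  have h3 : ∫ q : ℝ × ℝ, f q ^ (n + 1) * D2 (D2 f) q
      = ∫ ξ : ℝ, ∫ y : ℝ, f (ξ, y) ^ (n + 1) * D2 (D2 f) (ξ, y) := integral_prod _ hintD
  have h4 : ∫ q : ℝ × ℝ, f q ^ n * D2 f q ^ 2
      = ∫ ξ : ℝ, ∫ y : ℝ, f (ξ, y) ^ n * D2 f (ξ, y) ^ 2 := integral_prod _ hintC
  have hkey : ((n : ℝ) + 1) * ∫ q : ℝ × ℝ, f q ^ n * D1 f q * g q
      = ((n : ℝ) + 1) * ∫ q : ℝ × ℝ, f q ^ n * D2 f q ^ 2 := by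
    calc ((n : ℝ) + 1) * ∫ q : ℝ × ℝ, f q ^ n * D1 f q * g q
        = ((n : ℝ) + 1) * ∫ y : ℝ, ∫ ξ : ℝ, f (ξ, y) ^ n * D1 f (ξ, y) * g (ξ, y) := by
          rw [h1]
      _ = ∫ y : ℝ, ((n : ℝ) + 1) * ∫ ξ : ℝ, f (ξ, y) ^ n * D1 f (ξ, y) * g (ξ, y) :=
          (integral_const_mul _ _).symm
      _ = ∫ y : ℝ, -∫ ξ : ℝ, f (ξ, y) ^ (n + 1) * D2 (D2 f) (ξ, y) :=
          integral_congr_ae (Filter.Eventually.of_forall fun y => stepA y)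
      _ = - ∫ y : ℝ, ∫ ξ : ℝ, f (ξ, y) ^ (n + 1) * D2 (D2 f) (ξ, y) := integral_neg _
      _ = - ∫ q : ℝ × ℝ, f q ^ (n + 1) * D2 (D2 f) q := by rw [h2]
      _ = - ∫ ξ : ℝ, ∫ y : ℝ, f (ξ, y) ^ (n + 1) * D2 (D2 f) (ξ, y) := by rw [h3]
      _ = - ∫ ξ : ℝ, -(((n : ℝ) + 1) * ∫ y : ℝ, f (ξ, y) ^ n * D2 f (ξ, y) ^ 2) := by
          rw [integral_congr_ae (Filter.Eventually.of_forall fun ξ => stepB ξ)]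
      _ = ∫ ξ : ℝ, ((n : ℝ) + 1) * ∫ y : ℝ, f (ξ, y) ^ n * D2 f (ξ, y) ^ 2 := by
          rw [integral_neg]; ring
      _ = ((n : ℝ) + 1) * ∫ ξ : ℝ, ∫ y : ℝ, f (ξ, y) ^ n * D2 f (ξ, y) ^ 2 :=
          integral_const_mul _ _
      _ = ((n : ℝ) + 1) * ∫ q : ℝ × ℝ, f q ^ n * D2 f q ^ 2 := by rw [h4]
  have hne : ((n : ℝ) + 1) ≠ 0 := by positivity
  exact mul_left_cancel₀ hne hkey

lemma key_combined (f g : SchwartzMap (ℝ × ℝ) ℝ)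
    (hgξ : ∀ p : ℝ × ℝ, D1 g p = D2 (D2 f) p) (c : ℝ) (n : ℕ) :
    ∫ q : ℝ × ℝ, (f q * g q + c * (f q ^ n * D1 f q * g q) - c * (f q ^ n * D2 f q ^ 2))
      = 0 := by
  obtain ⟨Bf, hBf, hBfb⟩ := schwartz_bounded f
  obtain ⟨B1, hB1, hB1b⟩ := schwartz_bounded (D1 f)
  obtain ⟨B2, hB2, hB2b⟩ := schwartz_bounded (D2 f)
  have hbfn : ∀ p : ℝ × ℝ, ‖f p ^ n * D1 f p‖ ≤ Bf ^ n * B1 := by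
    intro p
    rw [norm_mul, norm_pow]
    exact mul_le_mul (pow_le_pow_left₀ (norm_nonneg _) (hBfb p) n) (hB1b p) (norm_nonneg _)
      (by positivity)
  have hbfn2 : ∀ p : ℝ × ℝ, ‖f p ^ n * D2 f p‖ ≤ Bf ^ n * B2 := by
    intro p
    rw [norm_mul, norm_pow]
    exact mul_le_mul (pow_le_pow_left₀ (norm_nonneg _) (hBfb p) n) (hB2b p) (norm_nonneg _)
      (by positivity)
  have hint1 : Integrable (fun q : ℝ × ℝ => f q * g q) :=
    integrable_bdd_mul_schwartz f.continuous.aestronglyMeasurable hBfb g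
  have hint2 : Integrable (fun q : ℝ × ℝ => f q ^ n * D1 f q * g q) :=
    integrable_bdd_mul_schwartz
      (((f.continuous.pow n).mul (D1 f).continuous).aestronglyMeasurable) hbfn g
  have hint3 : Integrable (fun q : ℝ × ℝ => f q ^ n * D2 f q ^ 2) := by
    have := integrable_bdd_mul_schwartz
      (u := fun q : ℝ × ℝ => f q ^ n * D2 f q)
      (((f.continuous.pow n).mul (D2 f).continuous).aestronglyMeasurable) hbfn2 (D2 f)
    exact this.congr (Filter.Eventually.of_forall fun q => by ring)
  have hint2' : Integrable (fun q : ℝ × ℝ => c * (f q ^ n * D1 f q * g q)) :=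
    hint2.const_mul c
  have hint3' : Integrable (fun q : ℝ × ℝ => c * (f q ^ n * D2 f q ^ 2)) :=
    hint3.const_mul c
  have hint12 : Integrable
      (fun q : ℝ × ℝ => f q * g q + c * (f q ^ n * D1 f q * g q)) := hint1.add hint2'
  rw [integral_sub hint12 hint3', integral_add hint1 hint2',
    integral_const_mul, integral_const_mul, key1 f g hgξ, key2 f g hgξ n]
  ring

/-- L² conservation for the evolutionary form of the transformed generalized dKP
equation F_t = σ((1 + t n F^{n−1} F_ξ) P − t n F^{n−1} F_y²), P_ξ = F_yy, for
solutions that are Schwartz in (ξ, y) for each t, assuming differentiation under the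
integral sign is justified. -/
theorem stmt_15 (n : ℕ) (hn : 0 < n) (σ : ℝ) (hσ : σ = 1 ∨ σ = -1)
    (T : ℝ) (hT : 0 < T) (F P : ℝ → ℝ → ℝ → ℝ)
    (hF : ContDiffOn ℝ (⊤ : ℕ∞) (fun q : ℝ × ℝ × ℝ => F q.1 q.2.1 q.2.2)
      {q : ℝ × ℝ × ℝ | 0 ≤ q.2.2 ∧ q.2.2 ≤ T})
    (hP : ContDiffOn ℝ (⊤ : ℕ∞) (fun q : ℝ × ℝ × ℝ => P q.1 q.2.1 q.2.2)
      {q : ℝ × ℝ × ℝ | 0 ≤ q.2.2 ∧ q.2.2 ≤ T})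
    (hPξ : ∀ ξ y t : ℝ, t ∈ Set.Icc 0 T →
      pd1 P ξ y t = pd2 (pd2 F) ξ y t)
    (hev : ∀ ξ y t : ℝ, t ∈ Set.Icc 0 T →
      pd3 F ξ y t
        = σ * ((1 + t * (n : ℝ) * (F ξ y t) ^ (n - 1) * pd1 F ξ y t) * P ξ y t
            - t * (n : ℝ) * (F ξ y t) ^ (n - 1) * (pd2 F ξ y t) ^ 2))
    (hFSchwartz : ∀ t ∈ Set.Icc (0 : ℝ) T,
      ∃ f : SchwartzMap (ℝ × ℝ) ℝ, ∀ ξ y : ℝ, f (ξ, y) = F ξ y t)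
    (hPSchwartz : ∀ t ∈ Set.Icc (0 : ℝ) T,
      ∃ g : SchwartzMap (ℝ × ℝ) ℝ, ∀ ξ y : ℝ, g (ξ, y) = P ξ y t)
    (hdiff : ∀ t ∈ Set.Icc (0 : ℝ) T,
      HasDerivAt (fun τ => ∫ q : ℝ × ℝ, (F q.1 q.2 τ) ^ 2)
        (∫ q : ℝ × ℝ, 2 * F q.1 q.2 t * pd3 F q.1 q.2 t) t) :
    ∀ t₁ ∈ Set.Icc (0 : ℝ) T, ∀ t₂ ∈ Set.Icc (0 : ℝ) T,
      (∫ q : ℝ × ℝ, (F q.1 q.2 t₁) ^ 2) = ∫ q : ℝ × ℝ, (F q.1 q.2 t₂) ^ 2 := by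
  -- the derivative of the L² norm vanishes
  have hzero : ∀ t ∈ Set.Icc (0 : ℝ) T,
      (∫ q : ℝ × ℝ, 2 * F q.1 q.2 t * pd3 F q.1 q.2 t) = 0 := by
    intro t ht
    obtain ⟨f, hf⟩ := hFSchwartz t ht
    obtain ⟨g, hg⟩ := hPSchwartz t ht
    have hpd1 : ∀ ξ y : ℝ, pd1 F ξ y t = D1 f (ξ, y) := by
      intro ξ y
      have he : (fun s => F s y t) = fun s => f (s, y) := funext fun s => (hf s y).symm
      rw [pd1, he]
      exact (hasDerivAt_fst f ξ y).deriv
    have hpd2 : ∀ ξ y : ℝ, pd2 F ξ y t = D2 f (ξ, y) := by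
      intro ξ y
      have he : (fun s => F ξ s t) = fun s => f (ξ, s) := funext fun s => (hf ξ s).symm
      rw [pd2, he]
      exact (hasDerivAt_snd f ξ y).deriv
    have hpd22 : ∀ ξ y : ℝ, pd2 (pd2 F) ξ y t = D2 (D2 f) (ξ, y) := by
      intro ξ y
      have he : (fun s => pd2 F ξ s t) = fun s => D2 f (ξ, s) := funext fun s => hpd2 ξ s
      rw [pd2, he]
      exact (hasDerivAt_snd (D2 f) ξ y).deriv
    have hpd1P : ∀ ξ y : ℝ, pd1 P ξ y t = D1 g (ξ, y) := by
      intro ξ y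
      have he : (fun s => P s y t) = fun s => g (s, y) := funext fun s => (hg s y).symm
      rw [pd1, he]
      exact (hasDerivAt_fst g ξ y).deriv
    have hgξ : ∀ p : ℝ × ℝ, D1 g p = D2 (D2 f) p := by
      rintro ⟨ξ, y⟩
      rw [← hpd1P ξ y, ← hpd22 ξ y]
      exact hPξ ξ y t ht
    set c : ℝ := t * (n : ℝ) with hc
    have hintegrand : ∀ q : ℝ × ℝ, 2 * F q.1 q.2 t * pd3 F q.1 q.2 t
        = (2 * σ) * (f q * g q + c * (f q ^ n * D1 f q * g q)
            - c * (f q ^ n * D2 f q ^ 2)) := by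
      rintro ⟨ξ, y⟩
      dsimp only
      rw [hev ξ y t ht, hpd1 ξ y, hpd2 ξ y, ← hf ξ y, ← hg ξ y]
      have hpow : f (ξ, y) ^ (n - 1) * f (ξ, y) = f (ξ, y) ^ n := by
        rw [← pow_succ]
        congr 1
        omega
      rw [← hpow]
      ring
    calc ∫ q : ℝ × ℝ, 2 * F q.1 q.2 t * pd3 F q.1 q.2 t
        = ∫ q : ℝ × ℝ, (2 * σ) * (f q * g q + c * (f q ^ n * D1 f q * g q)
            - c * (f q ^ n * D2 f q ^ 2)) :=
          integral_congr_ae (Filter.Eventually.of_forall hintegrand)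
      _ = (2 * σ) * ∫ q : ℝ × ℝ, (f q * g q + c * (f q ^ n * D1 f q * g q)
            - c * (f q ^ n * D2 f q ^ 2)) := integral_const_mul _ _
      _ = 0 := by rw [key_combined f g hgξ c n, mul_zero]
  -- conclude constancy
  have hconst : ∀ t ∈ Set.Icc (0 : ℝ) T,
      (∫ q : ℝ × ℝ, (F q.1 q.2 t) ^ 2) = ∫ q : ℝ × ℝ, (F q.1 q.2 0) ^ 2 := by
    apply constant_of_has_deriv_right_zero
      (f := fun τ => ∫ q : ℝ × ℝ, (F q.1 q.2 τ) ^ 2)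
    · intro x hx
      exact (hdiff x hx).continuousAt.continuousWithinAt
    · intro x hx
      have hx' : x ∈ Set.Icc (0 : ℝ) T := ⟨hx.1, hx.2.le⟩
      have h := hdiff x hx'
      rw [hzero x hx'] at h
      exact h.hasDerivWithinAt
  intro t₁ ht₁ t₂ ht₂
  rw [hconst t₁ ht₁, hconst t₂ ht₂]
end
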